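/- arXiv:2306.15420 — 2 statements merged into one kernel-verified Lean document; each statement's English description precedes it below -/
import Mathlib

section
/- With S, x₀, V, g as above, the minimizer p of the constrained least squares problem satisfies ∑_{x ∈ S} (p(x) - g(x₀))² ≤ ∑_{x ∈ S} (g(x) - g(x₀))². -/
/-- If `0 ≤ 2*t*A + t^2*B` for all `t` (with `0 ≤ B`), then `A = 0`. -/
lemma aux_quad {A B : ℝ} (hB : 0 ≤ B) (h : ∀ t : ℝ, 0 ≤ 2 * t * A + t ^ 2 * B) :
    A = 0 := by
  by_contra hA
  have hB1 : (0:ℝ) < B + 1 := by linarith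
  have := h (-A / (B + 1))
  have hA2 : 0 < A ^ 2 := by positivity
  have key : 2 * (-A / (B + 1)) * A + (-A / (B + 1)) ^ 2 * B
      = A ^ 2 * (B - 2 * (B + 1)) / (B + 1) ^ 2 := by
    field_simp
    ring
  rw [key] at this
  have hneg : A ^ 2 * (B - 2 * (B + 1)) / (B + 1) ^ 2 < 0 := by
    apply div_neg_of_neg_of_pos
    · apply mul_neg_of_pos_of_neg hA2
      linarith
    · positivity
  linarith

/-- Stability of the constrained least squares minimizer: with `V`
unisolvent and containing the constant functions, the minimizer `p` satisfies
`∑_{x ∈ S} (p x - g x₀)^2 ≤ ∑_{x ∈ S} (g x - g x₀)^2`. -/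
theorem stmt2 {d : ℕ} (S : Finset (EuclideanSpace ℝ (Fin d)))
    (x₀ : EuclideanSpace ℝ (Fin d)) (hx₀ : x₀ ∈ S)
    (V : Submodule ℝ (EuclideanSpace ℝ (Fin d) → ℝ)) [FiniteDimensional ℝ V]
    (hconst : (fun _ => (1 : ℝ)) ∈ V)
    (hV : ∀ p ∈ V, (∀ x ∈ S, p x = 0) → p = 0)
    (g : EuclideanSpace ℝ (Fin d) → ℝ)
    (p : EuclideanSpace ℝ (Fin d) → ℝ) (hp : p ∈ V) (hpc : p x₀ = g x₀)
    (hmin : ∀ q ∈ V, q x₀ = g x₀ →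
      ∑ x ∈ S, (p x - g x) ^ 2 ≤ ∑ x ∈ S, (q x - g x) ^ 2) :
    ∑ x ∈ S, (p x - g x₀) ^ 2 ≤ ∑ x ∈ S, (g x - g x₀) ^ 2 := by
  classical
  set v : EuclideanSpace ℝ (Fin d) → ℝ := fun x => p x - g x₀ with hv
  have hvV : v ∈ V := by
    have : v = p - (g x₀) • (fun _ => (1:ℝ)) := by
      funext x; simp [hv]
    rw [this]
    exact V.sub_mem hp (V.smul_mem _ hconst)
  have hvx₀ : v x₀ = 0 := by simp [hv, hpc]
  -- orthogonality: ∑ (p x - g x) * v x = 0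
  set A : ℝ := ∑ x ∈ S, (p x - g x) * v x with hA
  set B : ℝ := ∑ x ∈ S, v x ^ 2 with hB
  have hBnn : 0 ≤ B := Finset.sum_nonneg fun x _ => sq_nonneg _
  have hA0 : A = 0 := by
    apply aux_quad hBnn
    intro t
    have hq : (p + t • v) ∈ V := V.add_mem hp (V.smul_mem _ hvV)
    have hqx : (p + t • v) x₀ = g x₀ := by
      simp [hvx₀, hpc]
    have := hmin _ hq hqx
    have expand : ∑ x ∈ S, ((p + t • v) x - g x) ^ 2
        = ∑ x ∈ S, (p x - g x) ^ 2 + (2 * t * A + t ^ 2 * B) := by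
      rw [hA, hB, Finset.mul_sum, Finset.mul_sum, ← Finset.sum_add_distrib,
        ← Finset.sum_add_distrib]
      apply Finset.sum_congr rfl
      intro x _
      simp only [Pi.add_apply, Pi.smul_apply, smul_eq_mul]
      ring
    rw [expand] at this
    linarith
  -- A = ∑ (p x - g x)*(p x - g x₀) = 0, so ∑ (p-g₀)² = ∑ (p-g₀)(g-g₀)
  have key : ∑ x ∈ S, (p x - g x₀) ^ 2 = ∑ x ∈ S, (p x - g x₀) * (g x - g x₀) := by
    have : ∑ x ∈ S, (p x - g x₀) ^ 2
        = A + ∑ x ∈ S, (p x - g x₀) * (g x - g x₀) := by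
      rw [hA, ← Finset.sum_add_distrib]
      apply Finset.sum_congr rfl
      intro x _
      simp only [hv]
      ring
    rw [this, hA0, zero_add]
  -- Cauchy–Schwarz
  set P : ℝ := ∑ x ∈ S, (p x - g x₀) ^ 2 with hP
  set G : ℝ := ∑ x ∈ S, (g x - g x₀) ^ 2 with hG
  have hPnn : 0 ≤ P := Finset.sum_nonneg fun x _ => sq_nonneg _
  have hGnn : 0 ≤ G := Finset.sum_nonneg fun x _ => sq_nonneg _
  have cs : (∑ x ∈ S, (p x - g x₀) * (g x - g x₀)) ^ 2 ≤ P * G := by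
    rw [hP, hG]
    exact Finset.sum_mul_sq_le_sq_mul_sq S _ _
  have hP2 : P ^ 2 ≤ P * G := by
    calc P ^ 2 = (∑ x ∈ S, (p x - g x₀) * (g x - g x₀)) ^ 2 := by rw [key]
    _ ≤ P * G := cs
  have final : P ≤ G := by
    rcases eq_or_lt_of_le hPnn with h | h
    · rw [← h]; exact hGnn
    · nlinarith
  rw [hB] at hBnn ⊢
  exact final
end

section
/- Let S be a finite set of points containing x₀, let V be a finite-dimensional unisolvent space of continuous functions on a compact set D ⊇ S containing constants, and define Λ := max over nonzero p ∈ V of (sup_{x ∈ D} |p(x)|) / (max_{x ∈ S} |p(x)|). Then the constrained least-squares solution p for data g satisfies sup_{x ∈ D} |p(x)| ≤ (1 + 2Λ√(#S)) · max_{x ∈ S} |g(x)|. -/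
/-- `L∞`-stability of the constrained least squares reconstruction:
if `Λ` bounds the ratio `sup_{x ∈ D} |p x| / max_{x ∈ S} |p x|` over nonzero `p ∈ V`
(Lebesgue-type constant on the compact set `D ⊇ S`), and `p` is the constrained
least-squares solution for data `g`, then
`sup_{x ∈ D} |p x| ≤ (1 + 2Λ√(#S)) · max_{x ∈ S} |g x|`. -/
theorem stmt3 {d : ℕ} (S : Finset (EuclideanSpace ℝ (Fin d))) (hS : S.Nonempty)
    (x₀ : EuclideanSpace ℝ (Fin d)) (hx₀ : x₀ ∈ S)
    (D : Set (EuclideanSpace ℝ (Fin d))) (hD : IsCompact D) (hSD : ↑S ⊆ D)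
    (V : Submodule ℝ (EuclideanSpace ℝ (Fin d) → ℝ)) [FiniteDimensional ℝ V]
    (hconst : (fun _ => (1 : ℝ)) ∈ V)
    (hVcont : ∀ p ∈ V, Continuous p)
    (hV : ∀ p ∈ V, (∀ x ∈ S, p x = 0) → p = 0)
    (Λ : ℝ) (hΛ0 : 0 ≤ Λ)
    (hΛ : ∀ p ∈ V, ∀ x ∈ D, |p x| ≤ Λ * S.sup' hS fun y => |p y|)
    (g : EuclideanSpace ℝ (Fin d) → ℝ)
    (p : EuclideanSpace ℝ (Fin d) → ℝ) (hp : p ∈ V) (hpc : p x₀ = g x₀)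
    (hmin : ∀ q ∈ V, q x₀ = g x₀ →
      ∑ x ∈ S, (p x - g x) ^ 2 ≤ ∑ x ∈ S, (q x - g x) ^ 2) :
    ∀ x ∈ D, |p x| ≤ (1 + 2 * Λ * Real.sqrt S.card) * S.sup' hS fun y => |g y| := by
  set M : ℝ := S.sup' hS fun y => |g y| with hMdef
  have hMg : ∀ y ∈ S, |g y| ≤ M := fun y hy => by
    rw [hMdef]; exact Finset.le_sup' (fun y => |g y|) hy
  have hM0 : 0 ≤ M := le_trans (abs_nonneg _) (hMg x₀ hx₀)
  -- the function r = p - g x₀ • 1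
  set r : EuclideanSpace ℝ (Fin d) → ℝ := fun x => p x - g x₀ with hrdef
  have hrV : r ∈ V := by
    have : r = p - (g x₀) • (fun _ => (1 : ℝ)) := by
      funext x; simp [hrdef]
    rw [this]
    exact Submodule.sub_mem V hp (Submodule.smul_mem V _ hconst)
  have hrx₀ : r x₀ = 0 := by simp [hrdef, hpc]
  set A : ℝ := ∑ x ∈ S, (p x - g x) * r x with hAdef
  set B : ℝ := ∑ x ∈ S, (r x) ^ 2 with hBdef
  have hB0 : 0 ≤ B := Finset.sum_nonneg fun _ _ => sq_nonneg _
  -- variational inequality: ∀ t, 0 ≤ 2*t*A + t^2*B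
  have hvar : ∀ t : ℝ, 0 ≤ 2 * t * A + t ^ 2 * B := by
    intro t
    have hqV : (fun x => p x + t * r x) ∈ V := by
      have : (fun x => p x + t * r x) = p + t • r := by
        funext x; simp [smul_eq_mul]
      rw [this]
      exact Submodule.add_mem V hp (Submodule.smul_mem V _ hrV)
    have hq₀ : p x₀ + t * r x₀ = g x₀ := by rw [hrx₀]; simpa using hpc
    have h := hmin _ hqV hq₀
    have hexp : ∑ x ∈ S, (p x + t * r x - g x) ^ 2
        = ∑ x ∈ S, (p x - g x) ^ 2 + 2 * t * A + t ^ 2 * B := by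
      rw [hAdef, hBdef, Finset.mul_sum, Finset.mul_sum, ← Finset.sum_add_distrib,
        ← Finset.sum_add_distrib]
      exact Finset.sum_congr rfl fun x _ => by ring
    rw [hexp] at h
    linarith
  -- orthogonality: A = 0
  have hA : A = 0 := by
    have hB1 : (0:ℝ) < B + 1 := by linarith
    have h1 := hvar (-A / (B + 1))
    have h2 : 2 * (-A / (B + 1)) * A + (-A / (B + 1)) ^ 2 * B
        = (-(A ^ 2) * (B + 2)) / (B + 1) ^ 2 := by
      field_simp; ring
    rw [h2] at h1
    have h3 : 0 ≤ -(A ^ 2) * (B + 2) := by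
      have h4 := (le_div_iff₀ (show (0:ℝ) < (B + 1) ^ 2 by positivity)).mp h1
      simpa using h4
    have hA2 : A ^ 2 ≤ 0 := by nlinarith
    have := sq_nonneg A
    have : A ^ 2 = 0 := le_antisymm hA2 this
    exact pow_eq_zero_iff (n := 2) (by norm_num) |>.mp this
  -- bound B ≤ 4 M² #S
  have hBsum : B = ∑ x ∈ S, r x * (g x - g x₀) := by
    have : B = A + ∑ x ∈ S, r x * (g x - g x₀) := by
      rw [hAdef, hBdef, ← Finset.sum_add_distrib]
      exact Finset.sum_congr rfl fun x _ => by simp [hrdef]; ring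
    rw [this, hA, zero_add]
  have hCS : B ^ 2 ≤ B * ∑ x ∈ S, (g x - g x₀) ^ 2 := by
    calc B ^ 2 = (∑ x ∈ S, r x * (g x - g x₀)) ^ 2 := by rw [hBsum]
      _ ≤ (∑ x ∈ S, (r x) ^ 2) * ∑ x ∈ S, (g x - g x₀) ^ 2 :=
          Finset.sum_mul_sq_le_sq_mul_sq S _ _
      _ = B * ∑ x ∈ S, (g x - g x₀) ^ 2 := by rw [hBdef]
  have hgsum : ∑ x ∈ S, (g x - g x₀) ^ 2 ≤ (S.card : ℝ) * (2 * M) ^ 2 := by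
    calc ∑ x ∈ S, (g x - g x₀) ^ 2 ≤ ∑ _x ∈ S, (2 * M) ^ 2 := by
          apply Finset.sum_le_sum
          intro x hx
          have h1 : |g x - g x₀| ≤ 2 * M := by
            have := hMg x hx; have := hMg x₀ hx₀
            have := abs_sub (g x) (g x₀)
            calc |g x - g x₀| ≤ |g x| + |g x₀| := abs_sub _ _
              _ ≤ 2 * M := by linarith
          calc (g x - g x₀) ^ 2 = |g x - g x₀| ^ 2 := (sq_abs _).symm
            _ ≤ (2 * M) ^ 2 := by
                apply pow_le_pow_left₀ (abs_nonneg _) h1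
      _ = (S.card : ℝ) * (2 * M) ^ 2 := by
          rw [Finset.sum_const, nsmul_eq_mul]
  have hB : B ≤ (S.card : ℝ) * (2 * M) ^ 2 := by
    rcases eq_or_lt_of_le hB0 with h | h
    · rw [← h]; positivity
    · have h1 : B * B ≤ B * ((S.card : ℝ) * (2 * M) ^ 2) := by
        calc B * B = B ^ 2 := (sq B).symm
          _ ≤ B * ∑ x ∈ S, (g x - g x₀) ^ 2 := hCS
          _ ≤ B * ((S.card : ℝ) * (2 * M) ^ 2) :=
              mul_le_mul_of_nonneg_left hgsum hB0
      exact le_of_mul_le_mul_left h1 h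
  -- pointwise bound on S: |r y| ≤ 2 M √#S
  have hrS : ∀ y ∈ S, |r y| ≤ 2 * M * Real.sqrt S.card := by
    intro y hy
    have h1 : (r y) ^ 2 ≤ B := Finset.single_le_sum (f := fun x => (r x) ^ 2)
      (fun _ _ => sq_nonneg _) hy
    have h2 : (r y) ^ 2 ≤ (2 * M * Real.sqrt S.card) ^ 2 := by
      have : (2 * M * Real.sqrt S.card) ^ 2 = (S.card : ℝ) * (2 * M) ^ 2 := by
        rw [mul_pow, Real.sq_sqrt (by positivity)]; ring
      rw [this]; exact h1.trans hB
    have := abs_le_abs (a := r y) (b := 2 * M * Real.sqrt S.card)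
    calc |r y| = Real.sqrt ((r y) ^ 2) := (Real.sqrt_sq_eq_abs _).symm
      _ ≤ Real.sqrt ((2 * M * Real.sqrt S.card) ^ 2) := Real.sqrt_le_sqrt h2
      _ = 2 * M * Real.sqrt S.card := Real.sqrt_sq (by positivity)
  -- final bound
  intro x hxD
  have hrD : |r x| ≤ Λ * (2 * M * Real.sqrt S.card) := by
    have h1 := hΛ r hrV x hxD
    have h2 : (S.sup' hS fun y => |r y|) ≤ 2 * M * Real.sqrt S.card :=
      Finset.sup'_le hS _ hrS
    calc |r x| ≤ Λ * S.sup' hS fun y => |r y| := h1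
      _ ≤ Λ * (2 * M * Real.sqrt S.card) := mul_le_mul_of_nonneg_left h2 hΛ0
  have hgx₀ : |g x₀| ≤ M := hMg x₀ hx₀
  calc |p x| = |g x₀ + r x| := by congr 1; simp [hrdef]
    _ ≤ |g x₀| + |r x| := abs_add_le _ _
    _ ≤ M + Λ * (2 * M * Real.sqrt S.card) := add_le_add hgx₀ hrD
    _ = (1 + 2 * Λ * Real.sqrt S.card) * M := by ring
end
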